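/- Let H be a closed subgroup of Z_2^× with H ∩ (1 + 4Z_2) = 1 + 2^k Z_2 for some finite k > 2. Then H is one of the following three subgroups: 1 + 2^k Z_2, the closed subgroup generated by 2^{k-1} - 1, or {±1} × (1 + 2^k Z_2). -/

import Mathlib

/-- The subgroup `{±1}` of `ℤ_[2]ˣ`. -/
def pmOne : Subgroup ℤ_[2]ˣ where
  carrier := {x : ℤ_[2]ˣ | x = 1 ∨ x = -1}
  one_mem' := Or.inl rfl
  mul_mem' := by
    rintro a b (rfl | rfl) (rfl | rfl) <;> simp
  inv_mem' := by
    rintro a (rfl | rfl) <;> simp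

/-- The subgroup `1 + 2^k ℤ_2` of `ℤ_[2]ˣ`, as the kernel of reduction modulo `2^k`. -/
noncomputable def onePlusTwoPow (k : ℕ) : Subgroup ℤ_[2]ˣ :=
  MonoidHom.ker (Units.map (PadicInt.toZModPow (p := 2) k).toMonoidHom)

/-! Every unit of `ℤ_[2]` lies in `1 + 4ℤ_[2]` up to sign, and since the residue field is `𝔽₂`
each quotient `(1 + 2^j ℤ_[2]) / (1 + 2^(j+1) ℤ_[2])` has at most two elements. For `j ≥ 2`
squaring moves an element of exact level `j` to exact level `j + 1`, so the powers of such an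
`α` approximate any `t ∈ 1 + 2^j ℤ_[2]` one binary digit at a time, using `α ^ 2 ^ m` to fix
digit `j + m`; hence `α` topologically generates `1 + 2^j ℤ_[2]`.
If `g ∈ H` lies outside `1 + 4ℤ_[2]`, then `(-g)^2 ∈ H ∩ (1 + 4ℤ_[2])`, which forces
`-g ∈ 1 + 2^(k-1) ℤ_[2]`. Either `-1 ∈ H`, and `H = {±1} × (1 + 2^k ℤ_[2])`, or every such `g`
sits at exact level `k - 1` up to sign, hence agrees with `2^(k-1) - 1` modulo `2^k`. -/

theorem PadicInt.isUnit_iff_not_two_dvd {x : ℤ_[2]} : IsUnit x ↔ ¬ (2 : ℤ_[2]) ∣ x := by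
  have h := norm_lt_one_iff_dvd (p := 2) x
  simp only [Nat.cast_ofNat] at h
  rw [← h, ← not_isUnit_iff, not_not]

theorem mem_onePlusTwoPow_iff {k : ℕ} {x : ℤ_[2]ˣ} :
    x ∈ onePlusTwoPow k ↔ (2 : ℤ_[2]) ^ k ∣ (x : ℤ_[2]) - 1 := by
  rw [onePlusTwoPow, MonoidHom.mem_ker, Units.ext_iff, ← Nat.cast_ofNat (R := ℤ_[2]),
    ← Ideal.mem_span_singleton, ← PadicInt.ker_toZModPow, RingHom.mem_ker, map_sub, map_one,
    sub_eq_zero]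
  rfl

theorem mul_inv_mem_onePlusTwoPow_iff {k : ℕ} {x y : ℤ_[2]ˣ} :
    x * y⁻¹ ∈ onePlusTwoPow k ↔ (2 : ℤ_[2]) ^ k ∣ (x : ℤ_[2]) - y := by
  rw [mem_onePlusTwoPow_iff, ← Units.dvd_mul_right (u := y), sub_mul, Units.val_mul, mul_assoc,
    Units.inv_mul, mul_one, one_mul]

theorem onePlusTwoPow_antitone : Antitone onePlusTwoPow := fun _ _ h _ hx =>
  mem_onePlusTwoPow_iff.mpr ((pow_dvd_pow 2 h).trans (mem_onePlusTwoPow_iff.mp hx))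

theorem onePlusTwoPow_one : onePlusTwoPow 1 = ⊤ :=
  eq_top_iff.mpr fun _ _ => (show ∀ y : (ZMod (2 ^ 1))ˣ, y = 1 by decide) _

theorem two_dvd_val_sub_one (x : ℤ_[2]ˣ) : (2 : ℤ_[2]) ∣ (x : ℤ_[2]) - 1 := by
  have h := mem_onePlusTwoPow_iff.mp (onePlusTwoPow_one ▸ Subgroup.mem_top x)
  rwa [pow_one] at h

theorem PadicInt.two_dvd_sub_of_isUnit {s t : ℤ_[2]} (hs : IsUnit s) (ht : IsUnit t) :
    (2 : ℤ_[2]) ∣ s - t := by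
  obtain ⟨s, rfl⟩ := hs
  obtain ⟨t, rfl⟩ := ht
  simpa using (two_dvd_val_sub_one s).sub (two_dvd_val_sub_one t)

theorem mem_onePlusTwoPow_and_not_mem_succ_iff {k : ℕ} {x : ℤ_[2]ˣ} :
    x ∈ onePlusTwoPow k ∧ x ∉ onePlusTwoPow (k + 1) ↔
      ∃ s : ℤ_[2], IsUnit s ∧ (x : ℤ_[2]) - 1 = 2 ^ k * s := by
  have h2k : (2 : ℤ_[2]) ^ k ≠ 0 := pow_ne_zero _ two_ne_zero
  simp only [mem_onePlusTwoPow_iff, pow_succ]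
  constructor
  · rintro ⟨⟨s, hs⟩, hnot⟩
    refine ⟨s, PadicInt.isUnit_iff_not_two_dvd.mpr fun h2 => hnot ?_, hs⟩
    rw [hs]
    exact mul_dvd_mul_left _ (by simpa using h2)
  · rintro ⟨s, hs, hxs⟩
    rw [hxs, mul_dvd_mul_iff_left h2k]
    exact ⟨dvd_mul_right _ _, by simpa using PadicInt.isUnit_iff_not_two_dvd.mp hs⟩

theorem mul_inv_mem_onePlusTwoPow_succ {k : ℕ} {x y : ℤ_[2]ˣ}
    (hx : x ∈ onePlusTwoPow k ∧ x ∉ onePlusTwoPow (k + 1))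
    (hy : y ∈ onePlusTwoPow k ∧ y ∉ onePlusTwoPow (k + 1)) :
    x * y⁻¹ ∈ onePlusTwoPow (k + 1) := by
  obtain ⟨s, hs, hxs⟩ := mem_onePlusTwoPow_and_not_mem_succ_iff.mp hx
  obtain ⟨t, ht, hyt⟩ := mem_onePlusTwoPow_and_not_mem_succ_iff.mp hy
  rw [mul_inv_mem_onePlusTwoPow_iff, ← sub_sub_sub_cancel_right _ _ 1, hxs, hyt, ← mul_sub,
    pow_succ]
  exact mul_dvd_mul_left _ (PadicInt.two_dvd_sub_of_isUnit hs ht)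

theorem neg_mem_onePlusTwoPow_and_not_mem_succ {k : ℕ} {v : ℤ_[2]ˣ}
    (hv : (v : ℤ_[2]) = 2 ^ k - 1) : -v ∈ onePlusTwoPow k ∧ -v ∉ onePlusTwoPow (k + 1) :=
  mem_onePlusTwoPow_and_not_mem_succ_iff.mpr ⟨-1, isUnit_one.neg, by rw [Units.val_neg, hv]; ring⟩

theorem sq_mem_onePlusTwoPow_succ {k : ℕ} {x : ℤ_[2]ˣ} (hx : x ∈ onePlusTwoPow k) :
    x ^ 2 ∈ onePlusTwoPow (k + 1) := by
  rw [mem_onePlusTwoPow_iff] at hx ⊢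
  have h2 : (2 : ℤ_[2]) ∣ (x : ℤ_[2]) + 1 := by
    obtain ⟨c, hc⟩ := two_dvd_val_sub_one x
    exact ⟨c + 1, by linear_combination hc⟩
  rw [Units.val_pow_eq_pow_val, show (x : ℤ_[2]) ^ 2 - 1 = (x - 1) * (x + 1) by ring, pow_succ]
  exact mul_dvd_mul hx h2

theorem mem_onePlusTwoPow_of_sq_mem {k : ℕ} {x : ℤ_[2]ˣ} (hx : x ∈ onePlusTwoPow 2)
    (hsq : x ^ 2 ∈ onePlusTwoPow (k + 1)) : x ∈ onePlusTwoPow k := by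
  rw [mem_onePlusTwoPow_iff] at hx hsq ⊢
  obtain ⟨c, hc⟩ := hx
  have hunit : IsUnit (1 + 2 * c) := PadicInt.isUnit_iff_not_two_dvd.mpr fun h =>
    PadicInt.isUnit_iff_not_two_dvd.mp isUnit_one (by simpa using h.sub (dvd_mul_right 2 c))
  have hfac : ((x : ℤ_[2]) ^ 2 - 1) = ((x - 1) * (1 + 2 * c)) * 2 := by
    linear_combination (x - 1 : ℤ_[2]) * hc
  rw [Units.val_pow_eq_pow_val, hfac, pow_succ, mul_dvd_mul_iff_right two_ne_zero] at hsq
  exact hunit.dvd_mul_right.mp hsq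

theorem sq_mem_onePlusTwoPow_succ_and_not_mem {k : ℕ} (hk : 2 ≤ k) {x : ℤ_[2]ˣ}
    (hx : x ∈ onePlusTwoPow k ∧ x ∉ onePlusTwoPow (k + 1)) :
    x ^ 2 ∈ onePlusTwoPow (k + 1) ∧ x ^ 2 ∉ onePlusTwoPow (k + 2) :=
  ⟨sq_mem_onePlusTwoPow_succ hx.1,
    fun h => hx.2 (mem_onePlusTwoPow_of_sq_mem (onePlusTwoPow_antitone hk hx.1) h)⟩

theorem pow_two_pow_mem_onePlusTwoPow {k : ℕ} (hk : 2 ≤ k) {x : ℤ_[2]ˣ}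
    (hx : x ∈ onePlusTwoPow k ∧ x ∉ onePlusTwoPow (k + 1)) (m : ℕ) :
    x ^ 2 ^ m ∈ onePlusTwoPow (k + m) ∧ x ^ 2 ^ m ∉ onePlusTwoPow (k + m + 1) := by
  induction m with
  | zero => simpa using hx
  | succ m ih =>
    rw [pow_succ, pow_mul, ← add_assoc]
    exact sq_mem_onePlusTwoPow_succ_and_not_mem (by omega) ih

theorem mem_or_neg_mem_onePlusTwoPow_two (x : ℤ_[2]ˣ) :
    x ∈ onePlusTwoPow 2 ∨ -x ∈ onePlusTwoPow 2 := by
  refine or_iff_not_imp_left.mpr fun hx => ?_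
  have hx1 : x ∈ onePlusTwoPow 1 := onePlusTwoPow_one ▸ Subgroup.mem_top x
  have hneg : (-1 : ℤ_[2]ˣ) ∈ onePlusTwoPow 1 ∧ -1 ∉ onePlusTwoPow 2 :=
    neg_mem_onePlusTwoPow_and_not_mem_succ (by norm_num)
  simpa using mul_inv_mem_onePlusTwoPow_succ ⟨hx1, hx⟩ hneg

theorem exists_pow_mul_inv_mem_onePlusTwoPow {k : ℕ} (hk : 2 ≤ k) {α t : ℤ_[2]ˣ}
    (hα : α ∈ onePlusTwoPow k ∧ α ∉ onePlusTwoPow (k + 1)) (ht : t ∈ onePlusTwoPow k) (m : ℕ) :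
    ∃ n : ℕ, t * (α ^ n)⁻¹ ∈ onePlusTwoPow (k + m) := by
  induction m with
  | zero => exact ⟨0, by simpa using ht⟩
  | succ m ih =>
    obtain ⟨n, hn⟩ := ih
    by_cases hn' : t * (α ^ n)⁻¹ ∈ onePlusTwoPow (k + m + 1)
    · exact ⟨n, hn'⟩
    · refine ⟨n + 2 ^ m, ?_⟩
      rw [pow_add, mul_inv, ← mul_assoc]
      exact mul_inv_mem_onePlusTwoPow_succ ⟨hn, hn'⟩ (pow_two_pow_mem_onePlusTwoPow hk hα m)

open Filter Topology in
theorem tendsto_nhds_one_of_mem_onePlusTwoPow {w : ℕ → ℤ_[2]ˣ}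
    (hw : ∀ n, w n ∈ onePlusTwoPow n) : Tendsto w atTop (𝓝 1) := by
  have h2 : ‖(2 : ℤ_[2])‖ < 1 :=
    PadicInt.not_isUnit_iff.mp fun h => PadicInt.isUnit_iff_not_two_dvd.mp h dvd_rfl
  rw [Units.isOpenEmbedding_val.tendsto_nhds_iff, tendsto_iff_norm_sub_tendsto_zero]
  refine squeeze_zero (fun _ => norm_nonneg _) (fun n => ?_)
    (tendsto_pow_atTop_nhds_zero_of_lt_one (norm_nonneg _) h2)
  obtain ⟨c, hc⟩ := mem_onePlusTwoPow_iff.mp (hw n)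
  calc ‖(w n : ℤ_[2]) - 1‖ = ‖(2 : ℤ_[2])‖ ^ n * ‖c‖ := by simp [hc, norm_mul, norm_pow]
    _ ≤ ‖(2 : ℤ_[2])‖ ^ n := mul_le_of_le_one_right (by positivity) (PadicInt.norm_le_one c)

open Filter in
theorem mem_closure_of_forall_mul_inv_mem_onePlusTwoPow {S : Set ℤ_[2]ˣ} {t : ℤ_[2]ˣ}
    (h : ∀ n, ∃ z ∈ S, t * z⁻¹ ∈ onePlusTwoPow n) : t ∈ closure S := by
  choose z hzS hz using h
  have hlim := ((tendsto_nhds_one_of_mem_onePlusTwoPow hz).inv).mul_const t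
  simp only [mul_inv_rev, inv_inv, inv_mul_cancel_right, inv_one, one_mul] at hlim
  exact mem_closure_of_tendsto hlim (Eventually.of_forall hzS)

theorem onePlusTwoPow_le_topologicalClosure_zpowers {k : ℕ} (hk : 2 ≤ k) {α : ℤ_[2]ˣ}
    (hα : α ∈ onePlusTwoPow k ∧ α ∉ onePlusTwoPow (k + 1)) :
    onePlusTwoPow k ≤ (Subgroup.zpowers α).topologicalClosure := by
  intro t ht
  rw [← SetLike.mem_coe, Subgroup.topologicalClosure_coe]
  refine mem_closure_of_forall_mul_inv_mem_onePlusTwoPow fun m => ?_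
  obtain ⟨n, hn⟩ := exists_pow_mul_inv_mem_onePlusTwoPow hk hα ht m
  exact ⟨α ^ n, Subgroup.npow_mem_zpowers α n, onePlusTwoPow_antitone (by omega) hn⟩

theorem PadicInt.isUnit_two_pow_sub_one {k : ℕ} (hk : k ≠ 0) : IsUnit ((2 : ℤ_[2]) ^ k - 1) :=
  isUnit_iff_not_two_dvd.mpr fun h => isUnit_iff_not_two_dvd.mp isUnit_one <| by
    simpa using (dvd_pow_self 2 hk).sub h

section

variable {k : ℕ} {H : Subgroup ℤ_[2]ˣ}

theorem onePlusTwoPow_le_of_inf_eq (hint : H ⊓ onePlusTwoPow 2 = onePlusTwoPow k) :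
    onePlusTwoPow k ≤ H :=
  hint ▸ inf_le_left

theorem mem_onePlusTwoPow_of_inf_eq (hint : H ⊓ onePlusTwoPow 2 = onePlusTwoPow k) {x : ℤ_[2]ˣ}
    (hx : x ∈ H) (hx2 : x ∈ onePlusTwoPow 2) : x ∈ onePlusTwoPow k :=
  hint ▸ ⟨hx, hx2⟩

theorem eq_pmOne_sup_of_neg_one_mem (hint : H ⊓ onePlusTwoPow 2 = onePlusTwoPow k)
    (h1 : -1 ∈ H) : H = pmOne ⊔ onePlusTwoPow k := by
  refine le_antisymm (fun x hx => ?_) (sup_le ?_ (onePlusTwoPow_le_of_inf_eq hint))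
  · rcases mem_or_neg_mem_onePlusTwoPow_two x with hx2 | hx2
    · exact Subgroup.mem_sup_right (mem_onePlusTwoPow_of_inf_eq hint hx hx2)
    · have hnx : -x ∈ H := by simpa using mul_mem h1 hx
      rw [← neg_neg x, ← neg_one_mul]
      exact mul_mem (Subgroup.mem_sup_left (Or.inr rfl))
        (Subgroup.mem_sup_right (mem_onePlusTwoPow_of_inf_eq hint hnx hx2))
  · rintro x (rfl | rfl)
    exacts [one_mem H, h1]

theorem neg_mem_onePlusTwoPow_of_inf_eq (hint : H ⊓ onePlusTwoPow 2 = onePlusTwoPow (k + 1))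
    {x : ℤ_[2]ˣ} (hx : x ∈ H) (hx2 : x ∉ onePlusTwoPow 2) : -x ∈ onePlusTwoPow k := by
  have hnx := (mem_or_neg_mem_onePlusTwoPow_two x).resolve_left hx2
  refine mem_onePlusTwoPow_of_sq_mem hnx ?_
  rw [neg_sq]
  exact mem_onePlusTwoPow_of_inf_eq hint (pow_mem hx 2) (neg_sq x ▸ pow_mem hnx 2)

theorem mul_inv_mem_onePlusTwoPow_of_inf_eq (hint : H ⊓ onePlusTwoPow 2 = onePlusTwoPow (k + 1))
    (h1 : -1 ∉ H) {v : ℤ_[2]ˣ} (hv : (v : ℤ_[2]) = 2 ^ k - 1) {x : ℤ_[2]ˣ} (hx : x ∈ H)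
    (hx2 : x ∉ onePlusTwoPow 2) : x * v⁻¹ ∈ onePlusTwoPow (k + 1) := by
  have hnx : -x ∉ onePlusTwoPow (k + 1) := fun h => h1 <| by
    simpa using mul_mem (onePlusTwoPow_le_of_inf_eq hint h) (inv_mem hx)
  simpa using mul_inv_mem_onePlusTwoPow_succ ⟨neg_mem_onePlusTwoPow_of_inf_eq hint hx hx2, hnx⟩
    (neg_mem_onePlusTwoPow_and_not_mem_succ hv)

theorem eq_topologicalClosure_of_neg_one_not_mem (hk : 2 ≤ k) (hH : IsClosed (H : Set ℤ_[2]ˣ))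
    (hint : H ⊓ onePlusTwoPow 2 = onePlusTwoPow (k + 1)) (h1 : -1 ∉ H) {g : ℤ_[2]ˣ}
    (hg : g ∈ H) (hg2 : g ∉ onePlusTwoPow 2) {v : ℤ_[2]ˣ} (hv : (v : ℤ_[2]) = 2 ^ k - 1) :
    H = (Subgroup.closure {v}).topologicalClosure := by
  have hvS : v ∈ Subgroup.closure {v} := Subgroup.subset_closure rfl
  have hvH : v ∈ H := by
    simpa using mul_mem (inv_mem (onePlusTwoPow_le_of_inf_eq hint
      (mul_inv_mem_onePlusTwoPow_of_inf_eq hint h1 hv hg hg2))) hg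
  refine le_antisymm (fun x hx => ?_) (Subgroup.topologicalClosure_minimal _
    ((Subgroup.closure_le H).mpr (Set.singleton_subset_iff.mpr hvH)) hH)
  have hUk : onePlusTwoPow (k + 1) ≤ (Subgroup.closure {v}).topologicalClosure :=
    (onePlusTwoPow_le_topologicalClosure_zpowers (by omega)
      (sq_mem_onePlusTwoPow_succ_and_not_mem hk (neg_mem_onePlusTwoPow_and_not_mem_succ hv))).trans
      (Subgroup.topologicalClosure_mono (Subgroup.zpowers_le.mpr (neg_sq v ▸ pow_mem hvS 2)))
  by_cases hx2 : x ∈ onePlusTwoPow 2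
  · exact hUk (mem_onePlusTwoPow_of_inf_eq hint hx hx2)
  · rw [← inv_mul_cancel_right x v]
    exact mul_mem (hUk (mul_inv_mem_onePlusTwoPow_of_inf_eq hint h1 hv hx hx2))
      (Subgroup.le_topologicalClosure _ hvS)

end

/-- Let `H` be a closed subgroup of `ℤ_[2]ˣ` with `H ∩ (1 + 4ℤ_2) = 1 + 2^k ℤ_2` for some
finite `k > 2`. Then `H` is one of: `1 + 2^k ℤ_2`, the closed subgroup generated by
`2^(k-1) - 1`, or `{±1} × (1 + 2^k ℤ_2)`. -/
theorem stmt_11 (k : ℕ) (hk : 2 < k) (H : Subgroup ℤ_[2]ˣ)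
    (hH : IsClosed (H : Set ℤ_[2]ˣ))
    (hint : H ⊓ onePlusTwoPow 2 = onePlusTwoPow k) :
    H = onePlusTwoPow k ∨
    (∃ u : ℤ_[2]ˣ, (u : ℤ_[2]) = 2 ^ (k - 1) - 1 ∧
      H = (Subgroup.closure {u}).topologicalClosure) ∨
    H = pmOne ⊔ onePlusTwoPow k := by
  by_cases hH2 : H ≤ onePlusTwoPow 2
  · exact Or.inl (by rw [← hint, inf_eq_left.mpr hH2])
  obtain ⟨g, hg, hg2⟩ := SetLike.not_le_iff_exists.mp hH2
  by_cases h1 : -1 ∈ H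
  · exact Or.inr (Or.inr (eq_pmOne_sup_of_neg_one_mem hint h1))
  obtain ⟨j, rfl⟩ : ∃ j, k = j + 1 := ⟨k - 1, by omega⟩
  obtain ⟨u, hu⟩ := PadicInt.isUnit_two_pow_sub_one (k := j) (by omega)
  refine Or.inr (Or.inl ⟨u, by simpa using hu, ?_⟩)
  exact eq_topologicalClosure_of_neg_one_not_mem (by omega) hH hint h1 hg hg2 hu
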